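/- The language of the test product automaton equals the set of indistinguishable pairs in K: L(T_{A,A'}) = {(w,w') ∈ Σ*×Σ* : w, w' ∈ K and AP(w) ∩ A'P(w') ≠ ∅}, where T_{A,A'} is the product automaton over states R×X×R with events Σ_{T,A,A'} := {(σ,σ') ∈ (Σ∪{ε})² \ {(ε,ε)} : AP(σ) ∩ A'P(σ') ≠ ∅} and transition δ((r,x',r'),(σ,σ')) = (η(r,σ), ξ(x',σ'), η(r',σ')) defined when all three component transitions are defined. -/

import Mathlib

variable {S D R X : Type*}

/-- `P : Σ* → Δ*` is an observation map. -/
def IsObsMap (P : List S → List D) : Prop :=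
  P [] = [] ∧ (∀ w s : List S, P (w ++ s) = P w ++ P s) ∧ ∀ σ : S, (P [σ]).length ≤ 1

/-- `A` is the replacement-removal attack generated by `φ : Δ → 2^{Δ ∪ {ε}}`. -/
def IsRRAttack (φ : D → Set (List D)) (A : List D → Set (List D)) : Prop :=
  (∀ t : D, ∀ v ∈ φ t, v.length ≤ 1) ∧ (A [] = {[]}) ∧
  ∀ (y : List D) (t : D),
    A (y ++ [t]) = {v | ∃ wy ∈ A y, ∃ wt ∈ φ t, v = wy ++ wt}

/-- Run of a deterministic partial automaton on a string. -/
def run {Q E : Type*} (δ : Q → E → Option Q) : Q → List E → Option Q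
  | q, [] => some q
  | q, e :: l =>
    match δ q e with
    | none => none
    | some q' => run δ q' l

/-- One step of an automaton by an element of `Σ ∪ {ε}` (an `Option S`):
`ε` leaves the state unchanged. -/
def step {Q : Type*} (δ : Q → S → Option Q) (q : Q) : Option S → Option Q
  | none => some q
  | some σ => δ q σ

/-- The event set `Σ_{T,A,A′}` of the test automaton: pairs in
`(Σ ∪ {ε}) × (Σ ∪ {ε}) \ {(ε,ε)}` whose attacked observations intersect. -/
def SigmaT (P : List S → List D) (A A' : List D → Set (List D)) :
    Set (Option S × Option S) :=
  {p | p ≠ (none, none) ∧ (A (P p.1.toList) ∩ A' (P p.2.toList)).Nonempty}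

/-- Transition map of the test automaton `T_{A,A′}` on states `R × X × R`. -/
def deltaT (η : R → S → Option R) (ξ : X → S → Option X)
    (q : R × X × R) (p : Option S × Option S) : Option (R × X × R) :=
  match step η q.1 p.1, step ξ q.2.1 p.2, step η q.2.2 p.2 with
  | some a, some b, some c => some (a, b, c)
  | _, _, _ => none

/-- First component of a string of pair-events, concatenated. -/
def flat1 (l : List (Option S × Option S)) : List S :=
  l.foldr (fun p acc => p.1.toList ++ acc) []

/-- Second component of a string of pair-events, concatenated. -/
def flat2 (l : List (Option S × Option S)) : List S :=
  l.foldr (fun p acc => p.2.toList ++ acc) []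

-- auxiliary lemmas
lemma run_append {Q E : Type*} (δ : Q → E → Option Q) (q : Q) (u v : List E) :
    run δ q (u ++ v) = (run δ q u).bind (fun q' => run δ q' v) := by
  induction u generalizing q with
  | nil => simp [run]
  | cons e u ih =>
    simp only [List.cons_append, run]
    cases δ q e with
    | none => simp
    | some q' => simp [ih]

lemma run_toList {Q : Type*} (δ : Q → S → Option Q) (q : Q) (o : Option S) :
    run δ q o.toList = step δ q o := by
  cases o with
  | none => rfl
  | some σ =>
    show run δ q [σ] = δ q σ
    simp only [run]
    cases δ q σ <;> rfl

lemma attack_append {φ : D → Set (List D)} {A : List D → Set (List D)}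
    (hA : IsRRAttack φ A) (y z : List D) :
    A (y ++ z) = {v | ∃ u ∈ A y, ∃ w ∈ A z, v = u ++ w} := by
  induction z using List.reverseRecOn with
  | nil => ext v; simp [hA.2.1]
  | append_singleton z t ih =>
    rw [← List.append_assoc, hA.2.2, ih, hA.2.2]
    ext v
    constructor
    · rintro ⟨wy, ⟨u, hu, w, hw, rfl⟩, wt, hwt, rfl⟩
      exact ⟨u, hu, w ++ wt, ⟨w, hw, wt, hwt, rfl⟩, List.append_assoc ..⟩
    · rintro ⟨u, hu, w', ⟨w, hw, wt, hwt, rfl⟩, rfl⟩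
      exact ⟨u ++ w, ⟨u, hu, w, hw, rfl⟩, wt, hwt, (List.append_assoc ..).symm⟩

lemma attack_single {φ : D → Set (List D)} {A : List D → Set (List D)}
    (hA : IsRRAttack φ A) (t : D) : A [t] = φ t := by
  have h := hA.2.2 [] t
  simp only [List.nil_append] at h
  rw [h]; ext v; simp [hA.2.1]

lemma mem_nil_attack {φ : D → Set (List D)} {A : List D → Set (List D)}
    (hA : IsRRAttack φ A) : ([] : List D) ∈ A [] := by
  rw [hA.2.1]; rfl

lemma piece_len {P : List S → List D} (hP : IsObsMap P)
    {φ : D → Set (List D)} {A : List D → Set (List D)} (hA : IsRRAttack φ A)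
    {σ : S} {a : List D} (ha : a ∈ A (P [σ])) : a.length ≤ 1 := by
  rcases h : P [σ] with _ | ⟨t, rest⟩
  · rw [h, hA.2.1] at ha
    simp_all
  · have hlen := hP.2.2 σ
    rw [h] at hlen
    simp only [List.length_cons] at hlen
    have : rest = [] := by
      cases rest
      · rfl
      · simp at hlen
    subst this
    rw [h, attack_single hA] at ha
    exact hA.1 t a ha

lemma attack_cons {P : List S → List D} (hP : IsObsMap P)
    {φ : D → Set (List D)} {A : List D → Set (List D)} (hA : IsRRAttack φ A)
    {σ : S} {w : List S} {v : List D} (hv : v ∈ A (P (σ :: w))) :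
    ∃ a ∈ A (P [σ]), ∃ v2 ∈ A (P w), v = a ++ v2 := by
  have h : P (σ :: w) = P [σ] ++ P w := by
    have := hP.2.1 [σ] w; simpa using this
  rw [h, attack_append hA] at hv
  exact hv

lemma deltaT_eq_some {η : R → S → Option R} {ξ : X → S → Option X}
    {q q' : R × X × R} {p : Option S × Option S} :
    deltaT η ξ q p = some q' ↔
      step η q.1 p.1 = some q'.1 ∧ step ξ q.2.1 p.2 = some q'.2.1 ∧
      step η q.2.2 p.2 = some q'.2.2 := by
  unfold deltaT
  obtain ⟨a, b, c⟩ := q'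
  cases h1 : step η q.1 p.1 <;> cases h2 : step ξ q.2.1 p.2 <;>
    cases h3 : step η q.2.2 p.2 <;> simp_all [Prod.ext_iff, eq_comm]

lemma run_cons {Q E : Type*} (δ : Q → E → Option Q) (q : Q) (e : E) (l : List E) :
    run δ q (e :: l) = (δ q e).bind (fun q' => run δ q' l) := by
  simp only [run]; cases δ q e <;> rfl

lemma fwd {P : List S → List D} (hP : IsObsMap P)
    {φ φ' : D → Set (List D)} {A A' : List D → Set (List D)}
    (hA : IsRRAttack φ A) (hA' : IsRRAttack φ' A')
    (η : R → S → Option R) (ξ : X → S → Option X) :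
    ∀ (l : List (Option S × Option S)) (r : R) (x : X) (r' : R),
    (∀ e ∈ l, e ∈ SigmaT P A A') → (run (deltaT η ξ) (r, x, r') l).isSome →
    (run η r (flat1 l)).isSome ∧ (run η r' (flat2 l)).isSome ∧
    (A (P (flat1 l)) ∩ A' (P (flat2 l))).Nonempty := by
  intro l
  induction l with
  | nil =>
    intro r x r' _ _
    refine ⟨by simp [flat1, run], by simp [flat2, run],
      ⟨[], ?_, ?_⟩⟩ <;> simp [flat1, flat2, hP.1, hA.2.1, hA'.2.1]
  | cons e l ih =>
    intro r x r' hmem hrun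
    rw [run_cons] at hrun
    rcases hd : deltaT η ξ (r, x, r') e with _ | ⟨a, b, c⟩
    · rw [hd] at hrun; simp at hrun
    · rw [hd] at hrun
      rw [Option.bind_some] at hrun
      obtain ⟨h1, h2, h3⟩ := deltaT_eq_some.mp hd
      obtain ⟨ihr, ihr', v, hvA, hvA'⟩ := ih a b c (fun e he => hmem e (List.mem_cons_of_mem _ he)) hrun
      have hf1 : flat1 (e :: l) = e.1.toList ++ flat1 l := rfl
      have hf2 : flat2 (e :: l) = e.2.toList ++ flat2 l := rfl
      obtain ⟨-, v0, hv0A, hv0A'⟩ := hmem e (List.mem_cons_self (a := e) (l := l))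
      refine ⟨?_, ?_, ⟨v0 ++ v, ?_, ?_⟩⟩
      · rw [hf1, run_append, run_toList, h1]
        simpa using ihr
      · rw [hf2, run_append, run_toList, h3]
        simpa using ihr'
      · rw [hf1, hP.2.1, attack_append hA]
        exact ⟨v0, hv0A, v, hvA, rfl⟩
      · rw [hf2, hP.2.1, attack_append hA']
        exact ⟨v0, hv0A', v, hvA', rfl⟩

lemma step_pair {η : R → S → Option R} {ξ : X → S → Option X}
    {r' : R} {x : X} {σ' : S} {w2' : List S}
    (hw' : (run η r' (σ' :: w2')).isSome)
    (hx : ∀ s, (run η r' s).isSome → (run ξ x s).isSome) :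
    ∃ c b, η r' σ' = some c ∧ ξ x σ' = some b ∧ (run η c w2').isSome ∧
      ∀ s, (run η c s).isSome → (run ξ b s).isSome := by
  rw [run_cons] at hw'
  rcases hc : η r' σ' with _ | c
  · rw [hc] at hw'; simp at hw'
  · rw [hc, Option.bind_some] at hw'
    have h1 : (run η r' [σ']).isSome := by
      rw [run_cons, hc, Option.bind_some]; simp [run]
    have hξ := hx [σ'] h1
    rw [run_cons] at hξ
    rcases hb : ξ x σ' with _ | b
    · rw [hb] at hξ; simp at hξ
    · refine ⟨c, b, rfl, rfl, hw', fun s hs => ?_⟩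
      have := hx (σ' :: s) (by rw [run_cons, hc, Option.bind_some]; exact hs)
      rw [run_cons, hb, Option.bind_some] at this
      exact this

lemma flat1_cons (p : Option S × Option S) (l : List (Option S × Option S)) :
    flat1 (p :: l) = p.1.toList ++ flat1 l := rfl

lemma flat2_cons (p : Option S × Option S) (l : List (Option S × Option S)) :
    flat2 (p :: l) = p.2.toList ++ flat2 l := rfl

lemma bwd {P : List S → List D} (hP : IsObsMap P)
    {φ φ' : D → Set (List D)} {A A' : List D → Set (List D)}
    (hA : IsRRAttack φ A) (hA' : IsRRAttack φ' A')
    (η : R → S → Option R) (ξ : X → S → Option X) :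
    ∀ (n : ℕ) (w w' : List S) (r : R) (x : X) (r' : R) (v : List D),
    w.length + w'.length ≤ n →
    (run η r w).isSome → (run η r' w').isSome →
    (∀ s, (run η r' s).isSome → (run ξ x s).isSome) →
    v ∈ A (P w) → v ∈ A' (P w') →
    ∃ l, (∀ e ∈ l, e ∈ SigmaT P A A') ∧
      (run (deltaT η ξ) (r, x, r') l).isSome ∧ flat1 l = w ∧ flat2 l = w' := by
  intro n
  induction n with
  | zero =>
    intro w w' r x r' v hlen _ _ _ _ _
    obtain rfl : w = [] := List.length_eq_zero_iff.mp (by omega)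
    obtain rfl : w' = [] := List.length_eq_zero_iff.mp (by omega)
    exact ⟨[], by simp, by simp [run], rfl, rfl⟩
  | succ n ih =>
    intro w w' r x r' v hlen hw hw' hx hvA hvA'
    have hnilA : ([] : List D) ∈ A (P []) := by rw [hP.1, hA.2.1]; rfl
    have hnilA' : ([] : List D) ∈ A' (P []) := by rw [hP.1, hA'.2.1]; rfl
    rcases w with _ | ⟨σ, w2⟩
    · -- w = []
      have hv0 : v = [] := by rw [hP.1, hA.2.1] at hvA; exact hvA
      subst hv0
      rcases w' with _ | ⟨σ', w2'⟩
      · exact ⟨[], by simp, by simp [run], rfl, rfl⟩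
      · obtain ⟨a', ha', u2, hu2, heq⟩ := attack_cons hP hA' hvA'
        obtain ⟨rfl, rfl⟩ : a' = [] ∧ u2 = [] := List.append_eq_nil_iff.mp heq.symm
        obtain ⟨c, b, hc, hb, hrun2, hx'⟩ := step_pair hw' hx
        obtain ⟨l, hl1, hl2, hl3, hl4⟩ := ih [] w2' r b c []
          (by simp only [List.length_cons, List.length_nil] at hlen ⊢; omega)
          (by simp [run]) hrun2 hx' hnilA hu2
        refine ⟨(none, some σ') :: l, ?_, ?_, by simp [flat1_cons, hl3],
          by simp [flat2_cons, hl4]⟩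
        · intro e he
          rcases List.mem_cons.mp he with rfl | he
          · exact ⟨by simp, ⟨[], hnilA, ha'⟩⟩
          · exact hl1 e he
        · rw [run_cons]
          have hd : deltaT η ξ (r, x, r') (none, some σ') = some (r, b, c) :=
            deltaT_eq_some.mpr ⟨rfl, by simpa [step] using hb, by simpa [step] using hc⟩
          rw [hd, Option.bind_some]
          exact hl2
    · -- w = σ :: w2
      obtain ⟨a, haA, v2, hv2, rfl⟩ := attack_cons hP hA hvA
      rw [run_cons] at hw
      rcases ha1 : η r σ with _ | a₁
      · rw [ha1] at hw; simp at hw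
      rw [ha1, Option.bind_some] at hw
      rcases a with _ | ⟨t, arest⟩
      · -- a = [] : emit (some σ, none)
        simp only [List.nil_append] at hvA'
        obtain ⟨l, hl1, hl2, hl3, hl4⟩ := ih w2 w' a₁ x r' v2
          (by simp only [List.length_cons] at hlen; omega) hw hw' hx hv2 hvA'
        refine ⟨(some σ, none) :: l, ?_, ?_, by simp [flat1_cons, hl3],
          by simp [flat2_cons, hl4]⟩
        · intro e he
          rcases List.mem_cons.mp he with rfl | he
          · exact ⟨by simp, ⟨[], haA, hnilA'⟩⟩
          · exact hl1 e he
        · rw [run_cons]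
          have hd : deltaT η ξ (r, x, r') (some σ, none) = some (a₁, x, r') :=
            deltaT_eq_some.mpr ⟨by simpa [step] using ha1, rfl, rfl⟩
          rw [hd, Option.bind_some]
          exact hl2
      · -- a = t :: arest, arest = []
        obtain rfl : arest = [] := by
          have hle := piece_len hP hA haA
          simp only [List.length_cons] at hle
          exact List.length_eq_zero_iff.mp (by omega)
        rcases w' with _ | ⟨σ', w2'⟩
        · rw [hP.1, hA'.2.1] at hvA'
          simp at hvA'
        · obtain ⟨a', ha', u2, hu2, heq⟩ := attack_cons hP hA' hvA'
          obtain ⟨c, b, hc, hb, hrun2, hx'⟩ := step_pair hw' hx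
          rcases a' with _ | ⟨t', arest'⟩
          · -- a' = [] : emit (none, some σ')
            simp only [List.nil_append] at heq
            rw [← heq] at hu2
            have hwback : (run η r (σ :: w2)).isSome := by
              rw [run_cons, ha1, Option.bind_some]; exact hw
            obtain ⟨l, hl1, hl2, hl3, hl4⟩ := ih (σ :: w2) w2' r b c ([t] ++ v2)
              (by simp only [List.length_cons] at hlen ⊢; omega) hwback hrun2 hx' hvA hu2
            refine ⟨(none, some σ') :: l, ?_, ?_, by simp [flat1_cons, hl3],
              by simp [flat2_cons, hl4]⟩
            · intro e he
              rcases List.mem_cons.mp he with rfl | he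
              · exact ⟨by simp, ⟨[], hnilA, ha'⟩⟩
              · exact hl1 e he
            · rw [run_cons]
              have hd : deltaT η ξ (r, x, r') (none, some σ') = some (r, b, c) :=
                deltaT_eq_some.mpr ⟨rfl, by simpa [step] using hb, by simpa [step] using hc⟩
              rw [hd, Option.bind_some]
              exact hl2
          · -- a' = t' :: arest'
            obtain rfl : arest' = [] := by
              have hle := piece_len hP hA' ha'
              simp only [List.length_cons] at hle
              exact List.length_eq_zero_iff.mp (by omega)
            obtain ⟨rfl, rfl⟩ : t = t' ∧ v2 = u2 := by
              simp only [List.singleton_append, List.cons.injEq] at heq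
              exact ⟨heq.1, heq.2⟩
            obtain ⟨l, hl1, hl2, hl3, hl4⟩ := ih w2 w2' a₁ b c v2
              (by simp only [List.length_cons] at hlen; omega) hw hrun2 hx' hv2 hu2
            refine ⟨(some σ, some σ') :: l, ?_, ?_, by simp [flat1_cons, hl3],
              by simp [flat2_cons, hl4]⟩
            · intro e he
              rcases List.mem_cons.mp he with rfl | he
              · exact ⟨by simp, ⟨[t], haA, ha'⟩⟩
              · exact hl1 e he
            · rw [run_cons]
              have hd : deltaT η ξ (r, x, r') (some σ, some σ') = some (a₁, b, c) :=
                deltaT_eq_some.mpr ⟨by simpa [step] using ha1,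
                  by simpa [step] using hb, by simpa [step] using hc⟩
              rw [hd, Option.bind_some]
              exact hl2

/-- the language of the test automaton equals the set of
indistinguishable pairs in `K = L(G_K)`. -/
theorem stmt17 (P : List S → List D) (hP : IsObsMap P)
    (φ φ' : D → Set (List D)) (A A' : List D → Set (List D))
    (hA : IsRRAttack φ A) (hA' : IsRRAttack φ' A')
    (η : R → S → Option R) (ξ : X → S → Option X) (r₀ : R) (x₀ : X)
    (hKL : ∀ w : List S, (run η r₀ w).isSome → (run ξ x₀ w).isSome) :
    {p : List S × List S | ∃ l : List (Option S × Option S),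
        (∀ e ∈ l, e ∈ SigmaT P A A') ∧
        (run (deltaT η ξ) (r₀, x₀, r₀) l).isSome ∧
        p.1 = flat1 l ∧ p.2 = flat2 l}
      = {p : List S × List S | (run η r₀ p.1).isSome ∧ (run η r₀ p.2).isSome ∧
          (A (P p.1) ∩ A' (P p.2)).Nonempty} := by
  ext ⟨w, w'⟩
  simp only [Set.mem_setOf_eq]
  constructor
  · rintro ⟨l, hmem, hrun, rfl, rfl⟩
    exact fwd hP hA hA' η ξ l r₀ x₀ r₀ hmem hrun
  · rintro ⟨hw, hw', v, hvA, hvA'⟩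
    obtain ⟨l, hl1, hl2, hl3, hl4⟩ := bwd hP hA hA' η ξ (w.length + w'.length)
      w w' r₀ x₀ r₀ v le_rfl hw hw' hKL hvA hvA'
    exact ⟨l, hl1, hl2, hl3.symm, hl4.symm⟩
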